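/- In D_m (m >= 4) with r = e_{m-1} + e_m and m-1 <= n <= 2(m-2), the Gram matrix of the n roots e_m + e_1, ..., e_m + e_{m-2}, e_m - e_1, ..., e_m - e_{n-m+2} equals A(D_{m-2, n-m+2}) + 2I, where D_{s,t} is the graph obtained from the complete graph K_{s+t} by removing a perfect matching on 2t of its vertices; moreover these roots together with r generate D_m. -/
import Mathlib


open Matrix

/-- The standard basis vector `e_k` of `ℝ^N`. -/
def e {N : ℕ} (k : Fin N) : Fin N → ℝ := fun j => if j = k then 1 else 0

/-- The root lattice `D_m`: integer vectors in `ℝ^m` with even coordinate sum. -/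
def Dlat (m : ℕ) : Submodule ℤ (Fin m → ℝ) where
  carrier := {v | (∀ i, ∃ z : ℤ, v i = (z : ℝ)) ∧ ∃ k : ℤ, ∑ i, v i = 2 * (k : ℝ)}
  add_mem' := by
    rintro a b ⟨ha1, k, ha2⟩ ⟨hb1, l, hb2⟩
    refine ⟨fun i => ?_, k + l, ?_⟩
    · obtain ⟨z, hz⟩ := ha1 i
      obtain ⟨w, hw⟩ := hb1 i
      exact ⟨z + w, by simp [hz, hw]⟩
    · simp only [Pi.add_apply, Finset.sum_add_distrib, ha2, hb2]
      push_cast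
      ring
  zero_mem' := ⟨fun i => ⟨0, by simp⟩, 0, by simp⟩
  smul_mem' := by
    rintro c a ⟨ha1, k, ha2⟩
    refine ⟨fun i => ?_, c * k, ?_⟩
    · obtain ⟨z, hz⟩ := ha1 i
      exact ⟨c * z, by simp [hz, zsmul_eq_mul]⟩
    · show ∑ i, (c • a) i = 2 * ((c * k : ℤ) : ℝ)
      simp only [Pi.smul_apply, zsmul_eq_mul, ← Finset.mul_sum, ha2]
      push_cast
      ring


lemma edot {N : ℕ} (a b : Fin N) : e a ⬝ᵥ e b = if a = b then 1 else 0 := by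
  simp [dotProduct, e, Finset.sum_ite_eq', eq_comm]

lemma e_add_mem_Dlat {m : ℕ} (a b : Fin m) (hab : a ≠ b) : e a + e b ∈ Dlat m := by
  refine ⟨fun i => ?_, 1, ?_⟩
  · rcases eq_or_ne i a with rfl | h1
    · exact ⟨1, by simp [e, hab]⟩
    · rcases eq_or_ne i b with rfl | h2
      · exact ⟨1, by simp [e, h1]⟩
      · exact ⟨0, by simp [e, h1, h2]⟩
  · norm_num [e, Finset.sum_add_distrib, Finset.sum_ite_eq']

lemma e_sub_mem_Dlat {m : ℕ} (a b : Fin m) (hab : a ≠ b) : e a - e b ∈ Dlat m := by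
  refine ⟨fun i => ?_, 0, ?_⟩
  · rcases eq_or_ne i a with rfl | h1
    · exact ⟨1, by simp [e, hab]⟩
    · rcases eq_or_ne i b with rfl | h2
      · exact ⟨-1, by norm_num [e, h1]⟩
      · exact ⟨0, by simp [e, h1, h2]⟩
  · norm_num [e, Finset.sum_sub_distrib, Finset.sum_ite_eq']

/-- In `D_m` (`m ≥ 4`) with `r = e_{m-1} + e_m` and `m - 1 ≤ n ≤ 2(m-2)`, the Gram
matrix of the `n` roots `e_m + e_1, …, e_m + e_{m-2}, e_m - e_1, …, e_m - e_{n-m+2}`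
equals `A(D_{m-2, n-m+2}) + 2I`, where `D_{s,t}` is the complete graph `K_{s+t}`
minus a matching of size `t` (the matching pairs the `i`-th vertex with the
`(m-2)+i`-th vertex); moreover these roots together with `r` generate `D_m`. -/
theorem stmt10 (m n : ℕ) (hm : 4 ≤ m) (hn1 : m - 1 ≤ n) (hn2 : n ≤ 2 * (m - 2))
    (r : Fin m → ℝ) (hr : r = e ⟨m - 2, by omega⟩ + e ⟨m - 1, by omega⟩)
    (w : Fin n → (Fin m → ℝ))
    (hw : ∀ i : Fin n, w i =
      if h : (i : ℕ) < m - 2 then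
        e ⟨m - 1, by omega⟩ + e ⟨(i : ℕ), by omega⟩
      else
        e ⟨m - 1, by omega⟩ - e ⟨(i : ℕ) - (m - 2), by have := i.isLt; omega⟩) :
    (∀ i j : Fin n, w i ⬝ᵥ w j =
      if i = j then 2
      else if (i : ℕ) + (m - 2) = (j : ℕ) ∨ (j : ℕ) + (m - 2) = (i : ℕ) then 0
      else 1) ∧
    Submodule.span ℤ (insert r (Set.range w)) = Dlat m := by
  constructor
  · intro i j
    have hi' := i.isLt
    have hj' := j.isLt
    rw [hw i, hw j]
    rcases lt_or_ge (i : ℕ) (m - 2) with hi | hi <;>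
      rcases lt_or_ge (j : ℕ) (m - 2) with hj | hj
    · rw [dif_pos hi, dif_pos hj]
      simp only [add_dotProduct, dotProduct_add, edot, Fin.ext_iff, Fin.mk.injEq]
      split_ifs <;> norm_num <;> omega
    · rw [dif_pos hi, dif_neg (by omega)]
      simp only [add_dotProduct, dotProduct_sub, edot, Fin.ext_iff, Fin.mk.injEq]
      split_ifs <;> norm_num <;> omega
    · rw [dif_neg (by omega), dif_pos hj]
      simp only [sub_dotProduct, dotProduct_add, edot, Fin.ext_iff, Fin.mk.injEq]
      split_ifs <;> norm_num <;> omega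
    · rw [dif_neg (by omega), dif_neg (by omega)]
      simp only [sub_dotProduct, dotProduct_sub, edot, Fin.ext_iff, Fin.mk.injEq]
      split_ifs <;> norm_num <;> omega
  · set S := Submodule.span ℤ (insert r (Set.range w)) with hS
    have hm1 : m - 1 < m := by omega
    have hm2 : m - 2 < m := by omega
    have h0m : 0 < m := by omega
    set em1 : Fin m → ℝ := e ⟨m - 1, hm1⟩ with hem1
    set e0 : Fin m → ℝ := e ⟨0, h0m⟩ with he0
    have ha : ∀ k : ℕ, (hk : k < m - 2) → em1 + e (⟨k, by omega⟩ : Fin m) ∈ S := by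
      intro k hk
      have : em1 + e (⟨k, by omega⟩ : Fin m) = w ⟨k, by omega⟩ := by
        rw [hw ⟨k, by omega⟩, dif_pos hk]
      rw [this]
      exact Submodule.subset_span (Set.mem_insert_of_mem _ ⟨_, rfl⟩)
    have hb : em1 - e0 ∈ S := by
      have : em1 - e0 = w ⟨m - 2, by omega⟩ := by
        rw [hw ⟨m - 2, by omega⟩, dif_neg (lt_irrefl (m - 2))]
        rw [hem1, he0]
        congr 1
        exact congrArg e (Fin.ext (by simp))
      rw [this]
      exact Submodule.subset_span (Set.mem_insert_of_mem _ ⟨_, rfl⟩)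
    have hrS : r ∈ S := Submodule.subset_span (Set.mem_insert _ _)
    have h0 : (0:ℕ) < m - 2 := by omega
    have hdiff : ∀ k : Fin m, e k - e0 ∈ S := by
      intro k
      rcases lt_or_ge (k : ℕ) (m - 2) with hk | hk
      · have := sub_mem (ha k hk) (ha 0 h0)
        have heq : (em1 + e ⟨(k:ℕ), by omega⟩) - (em1 + e ⟨0, by omega⟩) = e k - e0 := by
          rw [show (⟨(k:ℕ), by omega⟩ : Fin m) = k from rfl, he0]; abel
        rwa [heq] at this
      · rcases eq_or_lt_of_le hk with hk2 | hk2
        · have := sub_mem hrS (ha 0 h0)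
          have heq : r - (em1 + e ⟨0, by omega⟩) = e k - e0 := by
            rw [hr, show (⟨m - 2, hm2⟩ : Fin m) = k from Fin.ext hk2, he0]
            abel
          rwa [heq] at this
        · have hk3 : (k : ℕ) = m - 1 := by have := k.isLt; omega
          have heq : em1 - e0 = e k - e0 := by
            rw [hem1, show (⟨m - 1, hm1⟩ : Fin m) = k from Fin.ext hk3.symm]
          rw [← heq]; exact hb
    have h2e0 : e0 + e0 ∈ S := by
      have := sub_mem (ha 0 h0) hb
      have heq : (em1 + e ⟨0, by omega⟩) - (em1 - e0) = e0 + e0 := by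
        rw [he0]; abel
      rwa [heq] at this
    apply le_antisymm
    · rw [hS, Submodule.span_le]
      rintro x (rfl | ⟨i, rfl⟩)
      · rw [hr]
        exact e_add_mem_Dlat _ _ (by simp [Fin.ext_iff]; omega)
      · rw [hw i]
        have hi := i.isLt
        split_ifs with h
        · exact e_add_mem_Dlat _ _ (by simp [Fin.ext_iff]; omega)
        · exact e_sub_mem_Dlat _ _ (by simp [Fin.ext_iff]; omega)
    · rintro v ⟨hv1, k, hv2⟩
      choose z hz using hv1
      have hsum : (∑ i : Fin m, (z i : ℝ)) = 2 * (k : ℝ) := by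
        rw [← hv2]
        exact Finset.sum_congr rfl fun i _ => (hz i).symm
      have hveq : v = (∑ i : Fin m, z i • (e i - e0)) + k • (e0 + e0) := by
        funext j
        have h1 : (∑ i : Fin m, z i • (e i - e0)) j
            = (∑ i : Fin m, (z i : ℝ) * (e i) j) - (∑ i : Fin m, (z i : ℝ)) * e0 j := by
          simp only [Finset.sum_apply, Pi.smul_apply, Pi.sub_apply, Pi.mul_apply, Pi.intCast_apply, zsmul_eq_mul, mul_sub,
            Finset.sum_sub_distrib, Finset.sum_mul]
        have h2 : ∑ i : Fin m, (z i : ℝ) * (e i) j = z j := by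
          simp [e, mul_ite, Finset.sum_ite_eq']
        rw [Pi.add_apply, h1, h2, hsum, Pi.smul_apply, Pi.add_apply, hz j, zsmul_eq_mul]
        ring
      rw [hveq]
      exact add_mem (Submodule.sum_mem _ fun i _ => Submodule.smul_mem _ _ (hdiff i))
        (Submodule.smul_mem _ _ h2e0)
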